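/- arXiv:1805.00212 — 3 statements merged into one kernel-verified Lean document; each statement's English description precedes it below -/
import Mathlib

section
/- Let z₁,...,z_m ∈ {−1,1} be k-wise independent uniform signs with k = p an even integer, and f ∈ ℝ^m with ‖f‖₂ > 0. Then for any λ > √p, Pr[|Σᵢ zᵢ fᵢ| ≥ λ‖f‖₂] ≤ (√p/λ)^p. -/
open MeasureTheory ProbabilityTheory

section Aux
open Finset Nat


lemma tail_aux_integral_prod {Ω ι : Type*} [MeasurableSpace Ω] {μ : Measure Ω}
    [IsProbabilityMeasure μ] {g : ι → Ω → ℝ}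
    (hindep : iIndepFun g μ) (hgmeas : ∀ i, Measurable (g i))
    (s : Finset ι) :
    ∫ ω, ∏ i ∈ s, g i ω ∂μ = ∏ i ∈ s, ∫ ω, g i ω ∂μ := by
  classical
  induction' s using Finset.induction_on with i s hi ih
  · simp
  · have hpm : Measurable (∏ j ∈ s, g j) := by
      rw [Finset.prod_fn]; exact Finset.measurable_prod _ fun j _ => hgmeas j
    have hdep : IndepFun (∏ j ∈ s, g j) (g i) μ :=
      hindep.indepFun_finsetProd_of_notMem hgmeas hi
    have h2 : (∫ ω, ∏ j ∈ insert i s, g j ω ∂μ) = integral μ ((∏ j ∈ s, g j) * g i) :=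
      integral_congr_ae (Filter.Eventually.of_forall fun ω => by
        simp [Finset.prod_insert hi, mul_comm])
    have h3 : integral μ (∏ j ∈ s, g j) = ∫ ω, ∏ j ∈ s, g j ω ∂μ := by
      rw [Finset.prod_fn]
    rw [h2, hdep.integral_mul_eq_mul_integral hpm.aestronglyMeasurable (hgmeas i).aestronglyMeasurable,
      h3, ih, Finset.prod_insert hi]
    ring

lemma tail_aux_fact_le (q : ℕ) : ∀ p, q ≤ p → p ! ≤ p ^ (p - q) * q ! := by
  intro p
  induction p with
  | zero => intro h; interval_cases q; simp
  | succ n ih =>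
    intro h
    rcases eq_or_lt_of_le h with rfl | h'
    · simp
    · have hq : q ≤ n := Nat.lt_succ_iff.mp h'
      calc (n+1)! = (n+1) * n ! := rfl
        _ ≤ (n+1) * (n ^ (n - q) * q !) := Nat.mul_le_mul_left _ (ih hq)
        _ ≤ (n+1) * ((n+1) ^ (n - q) * q !) := by gcongr <;> omega
        _ = (n+1) ^ (n + 1 - q) * q ! := by
            rw [show n + 1 - q = (n - q) + 1 by omega, pow_succ]
            ring

lemma tail_aux_multinomial_le {ι : Type*} (s : Finset ι) (b : ι → ℕ) (q : ℕ)
    (hb : ∑ i ∈ s, b i = q) :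
    Nat.multinomial s (fun i => 2 * b i) ≤ (2 * q) ^ q * Nat.multinomial s b := by
  have hspec2 := Nat.multinomial_spec s (fun i => 2 * b i)
  have hspec1 := Nat.multinomial_spec s b
  have hsum2 : ∑ i ∈ s, 2 * b i = 2 * q := by rw [← Finset.mul_sum, hb]
  have hPpos : 0 < ∏ i ∈ s, (2 * b i)! := Finset.prod_pos fun i _ => Nat.factorial_pos _
  have hPle : (∏ i ∈ s, (b i)!) ≤ ∏ i ∈ s, (2 * b i)! :=
    Finset.prod_le_prod' fun i _ => Nat.factorial_le (by omega)
  refine Nat.le_of_mul_le_mul_right ?_ hPpos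
  calc Nat.multinomial s (fun i => 2 * b i) * ∏ i ∈ s, (2 * b i)!
      = (2 * q)! := by rw [mul_comm, hspec2, hsum2]
    _ ≤ (2 * q) ^ q * q ! := by
        have := tail_aux_fact_le q (2 * q) (by omega)
        simpa [show 2 * q - q = q by omega] using this
    _ = (2 * q) ^ q * ((∏ i ∈ s, (b i)!) * Nat.multinomial s b) := by rw [hspec1, hb]
    _ ≤ (2 * q) ^ q * ((∏ i ∈ s, (2 * b i)!) * Nat.multinomial s b) := by gcongr
    _ = (2 * q) ^ q * Nat.multinomial s b * ∏ i ∈ s, (2 * b i)! := by ring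



lemma tail_aux_integral_sign_pow {Ω : Type*} [MeasurableSpace Ω] {μ : Measure Ω}
    [IsProbabilityMeasure μ] {X : Ω → ℝ} (hm : Measurable X)
    (hs : ∀ ω, X ω = 1 ∨ X ω = -1) (hu : μ {ω | X ω = 1} = 1 / 2) (a : ℕ) :
    ∫ ω, X ω ^ a ∂μ = if Even a then 1 else 0 := by
  have hA : MeasurableSet {ω | X ω = 1} := hm (measurableSet_singleton 1)
  have hX0 : ∫ ω, X ω ∂μ = 0 := by
    have hXeq : ∀ ω, X ω = {ω | X ω = 1}.indicator (fun _ => (2:ℝ)) ω - 1 := by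
      intro ω
      rcases hs ω with h | h
      · simp [Set.indicator_of_mem, h]; norm_num
      · have hnm : ω ∉ {ω | X ω = 1} := by simp [h]; norm_num
        simp [Set.indicator_of_notMem hnm, h]
    rw [integral_congr_ae (Filter.Eventually.of_forall hXeq),
      integral_sub ((integrable_const (2:ℝ)).indicator hA) (integrable_const 1),
      integral_indicator_const (2:ℝ) hA, integral_const, measureReal_def, hu]
    norm_num [ENNReal.toReal_div]
  by_cases ha : Even a
  · have : ∀ ω, X ω ^ a = 1 := by
      intro ω
      rcases hs ω with h | h
      · simp [h]
      · simp [h, ha.neg_one_pow]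
    rw [integral_congr_ae (Filter.Eventually.of_forall this), if_pos ha]
    simp
  · have hodd : Odd a := Nat.odd_iff.mpr (Nat.not_even_iff.mp ha)
    have : ∀ ω, X ω ^ a = X ω := by
      intro ω
      rcases hs ω with h | h
      · simp [h]
      · simp [h, hodd.neg_one_pow]
    rw [integral_congr_ae (Filter.Eventually.of_forall this), if_neg ha, hX0]

lemma tail_aux_moment {Ω : Type*} [MeasurableSpace Ω]
    (μ : Measure Ω) [IsProbabilityMeasure μ] (m : ℕ) (z : Fin m → Ω → ℝ)
    (hmeas : ∀ i, Measurable (z i))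
    (hsign : ∀ i ω, z i ω = 1 ∨ z i ω = -1)
    (hunif : ∀ i, μ {ω | z i ω = 1} = 1 / 2)
    (f : Fin m → ℝ) (q : ℕ) (hq0 : 0 < q)
    (hindep : ∀ s : Finset (Fin m), s.card ≤ 2 * q →
      iIndepFun (fun i : s => z i.val) μ) :
    ∫ ω, (∑ i, z i ω * f i) ^ (2 * q) ∂μ ≤ ((2 * q : ℕ) : ℝ) ^ q * (∑ i, (f i) ^ 2) ^ q := by
  classical
  set p := 2 * q with hpdef
  -- abbreviations
  have hzabs : ∀ i ω, |z i ω| = 1 := by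
    intro i ω; rcases hsign i ω with h | h <;> simp [h]
  have hPmeas : ∀ k : Fin m → ℕ, Measurable fun ω => ∏ i, z i ω ^ k i := fun k =>
    Finset.measurable_prod _ fun i _ => (hmeas i).pow_const _
  have hPint : ∀ k : Fin m → ℕ, Integrable (fun ω => ∏ i, z i ω ^ k i) μ := by
    intro k
    refine Integrable.mono' (integrable_const (1:ℝ)) (hPmeas k).aestronglyMeasurable
      (Filter.Eventually.of_forall fun ω => ?_)
    rw [Real.norm_eq_abs, Finset.abs_prod]
    calc ∏ i, |z i ω ^ k i| = ∏ i, (1:ℝ) := by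
          refine Finset.prod_congr rfl fun i _ => ?_
          rw [abs_pow, hzabs, one_pow]
      _ ≤ 1 := by simp
  -- expansion
  have hexp : ∀ ω, (∑ i, z i ω * f i) ^ p
      = ∑ k ∈ piAntidiag univ p,
          (Nat.multinomial univ k : ℝ) * ((∏ i, f i ^ k i) * ∏ i, z i ω ^ k i) := by
    intro ω
    rw [Finset.sum_pow_eq_sum_piAntidiag]
    refine Finset.sum_congr rfl fun k _ => ?_
    rw [← Finset.prod_mul_distrib]
    congr 1
    refine Finset.prod_congr rfl fun i _ => ?_
    rw [mul_pow]; ring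
  -- integral of each product of signs
  have hPval : ∀ k ∈ piAntidiag univ p,
      (∫ ω, ∏ i, z i ω ^ k i ∂μ) = if ∀ i, Even (k i) then (1:ℝ) else 0 := by
    intro k hk
    rw [Finset.mem_piAntidiag] at hk
    obtain ⟨hksum, -⟩ := hk
    set t : Finset (Fin m) := univ.filter fun i => k i ≠ 0 with ht
    have htcard : t.card ≤ p := by
      calc t.card = ∑ i ∈ t, 1 := by simp
        _ ≤ ∑ i ∈ t, k i := Finset.sum_le_sum fun i hi => by
            simp only [ht, Finset.mem_filter] at hi; omega
        _ ≤ ∑ i, k i := Finset.sum_le_sum_of_subset (Finset.filter_subset _ _)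
        _ = p := hksum
    have hProdt : ∀ ω, (∏ i, z i ω ^ k i) = ∏ i ∈ t, z i ω ^ k i := by
      intro ω
      refine (Finset.prod_filter_of_ne fun i _ hne => ?_).symm
      intro h0
      exact hne (by rw [h0, pow_zero])
    have hind : iIndepFun
        (fun j : t => fun ω => z j.val ω ^ k j.val) μ := by
      have := (hindep t htcard).comp (fun j : t => fun x : ℝ => x ^ k j.val)
        (fun j => measurable_id.pow_const _)
      exact this
    have hprod := tail_aux_integral_prod hind
      (fun j => (hmeas j.val).pow_const _) Finset.univ
    have hsigni : ∀ j : t, (∫ ω, z j.val ω ^ k j.val ∂μ)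
        = if Even (k j.val) then (1:ℝ) else 0 := fun j =>
      tail_aux_integral_sign_pow (hmeas j.val) (hsign j.val) (hunif j.val) _
    have hval : (∫ ω, ∏ i, z i ω ^ k i ∂μ)
        = ∏ j : t, (if Even (k j.val) then (1:ℝ) else 0) := by
      calc (∫ ω, ∏ i, z i ω ^ k i ∂μ)
          = ∫ a, ∏ j : t, z j.val a ^ k j.val ∂μ :=
            integral_congr_ae (Filter.Eventually.of_forall fun a => by
              show (∏ i, z i a ^ k i) = ∏ j : t, z j.val a ^ k j.val
              rw [hProdt a, Finset.prod_coe_sort t (fun i => z i a ^ k i)])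
        _ = ∏ j : t, ∫ a, z j.val a ^ k j.val ∂μ := hprod
        _ = ∏ j : t, (if Even (k j.val) then (1:ℝ) else 0) :=
            Finset.prod_congr rfl fun j _ => hsigni j
    by_cases hall : ∀ i, Even (k i)
    · rw [hval, if_pos hall]
      simp [hall]
    · rw [hval, if_neg hall]
      push_neg at hall
      obtain ⟨i, hi⟩ := hall
      have hit : i ∈ t := by
        simp only [ht, Finset.mem_filter, Finset.mem_univ, true_and]
        intro h0
        exact hi (h0 ▸ Even.zero)
      exact Finset.prod_eq_zero (Finset.mem_univ (⟨i, hit⟩ : t)) (by simp [hi])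
  -- compute the integral
  have hint : ∫ ω, (∑ i, z i ω * f i) ^ p ∂μ
      = ∑ k ∈ piAntidiag univ p, (Nat.multinomial univ k : ℝ) *
          ((∏ i, f i ^ k i) * (if ∀ i, Even (k i) then (1:ℝ) else 0)) := by
    calc ∫ ω, (∑ i, z i ω * f i) ^ p ∂μ
        = ∫ ω, ∑ k ∈ piAntidiag univ p, (Nat.multinomial univ k : ℝ) *
            ((∏ i, f i ^ k i) * ∏ i, z i ω ^ k i) ∂μ :=
          integral_congr_ae (Filter.Eventually.of_forall hexp)
      _ = ∑ k ∈ piAntidiag univ p, ∫ ω, (Nat.multinomial univ k : ℝ) *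
            ((∏ i, f i ^ k i) * ∏ i, z i ω ^ k i) ∂μ :=
          integral_finset_sum _ fun k _ => (((hPint k).const_mul _).const_mul _)
      _ = ∑ k ∈ piAntidiag univ p, (Nat.multinomial univ k : ℝ) *
            ((∏ i, f i ^ k i) * (if ∀ i, Even (k i) then (1:ℝ) else 0)) := by
          refine Finset.sum_congr rfl fun k hk => ?_
          rw [integral_const_mul, integral_const_mul, hPval k hk]
  rw [hint]
  -- restrict to even multi-indices and reindex by halving
  have hfilter : ∑ k ∈ piAntidiag univ p, (Nat.multinomial univ k : ℝ) *
          ((∏ i, f i ^ k i) * (if ∀ i, Even (k i) then (1:ℝ) else 0))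
      = ∑ k ∈ (piAntidiag univ p).filter (fun k => ∀ i, 2 ∣ k i),
          (Nat.multinomial univ k : ℝ) * ∏ i, f i ^ k i := by
    rw [Finset.sum_filter]
    refine Finset.sum_congr rfl fun k _ => ?_
    by_cases hall : ∀ i, Even (k i)
    · rw [if_pos hall, if_pos fun i => (hall i).two_dvd]
      ring
    · rw [if_neg hall, if_neg fun h => hall fun i => (even_iff_two_dvd).2 (h i)]
      ring
  have hmap := Finset.map_nsmul_piAntidiag_univ (ι := Fin m) q (two_ne_zero : (2:ℕ) ≠ 0)
  have hsets : ((piAntidiag (univ : Finset (Fin m)) (2*q)).filter (fun k => ∀ i, 2 ∣ k i))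
      = ((piAntidiag (univ : Finset (Fin m)) q).map
        ⟨((2:ℕ) • ·), fun a b h => funext fun i =>
          mul_right_injective₀ two_ne_zero (congrFun h i)⟩) := by
    rw [hmap]; congr!
  rw [hfilter, hpdef, hsets, Finset.sum_map]
  have hstep : ∀ b ∈ piAntidiag (univ : Finset (Fin m)) q,
      (Nat.multinomial univ ((2:ℕ) • b) : ℝ) * ∏ i, f i ^ ((2:ℕ) • b) i
        ≤ (((2*q:ℕ)) : ℝ) ^ q * ((Nat.multinomial univ b : ℝ) * ∏ i, (f i ^ 2) ^ b i) := by
    intro b hb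
    rw [Finset.mem_piAntidiag] at hb
    obtain ⟨hbsum, -⟩ := hb
    have h2b : ((2:ℕ) • b) = fun i => 2 * b i := by
      funext i; simp [Pi.smul_apply, smul_eq_mul]
    have hm := tail_aux_multinomial_le univ b q hbsum
    calc (Nat.multinomial univ ((2:ℕ) • b) : ℝ) * ∏ i, f i ^ ((2:ℕ) • b) i
        = (Nat.multinomial univ (fun i => 2 * b i) : ℝ) * ∏ i, (f i ^ 2) ^ b i := by
          rw [h2b]
          congr 1
          exact Finset.prod_congr rfl fun i _ => by rw [← pow_mul]
      _ ≤ (((2*q)^q * Nat.multinomial univ b : ℕ) : ℝ) * ∏ i, (f i ^ 2) ^ b i := by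
          have hnn : (0:ℝ) ≤ ∏ i, (f i ^ 2) ^ b i :=
            Finset.prod_nonneg fun i _ => pow_nonneg (sq_nonneg _) _
          exact mul_le_mul_of_nonneg_right (by exact_mod_cast hm) hnn
      _ = (((2*q:ℕ)) : ℝ) ^ q * ((Nat.multinomial univ b : ℝ) * ∏ i, (f i ^ 2) ^ b i) := by
          push_cast; ring
  calc ∑ b ∈ piAntidiag (univ : Finset (Fin m)) q,
        (Nat.multinomial univ ((2:ℕ) • b) : ℝ) * ∏ i, f i ^ ((2:ℕ) • b) i
      ≤ ∑ b ∈ piAntidiag (univ : Finset (Fin m)) q,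
        (((2*q:ℕ)) : ℝ) ^ q * ((Nat.multinomial univ b : ℝ) * ∏ i, (f i ^ 2) ^ b i) :=
        Finset.sum_le_sum hstep
    _ = (((2*q:ℕ)) : ℝ) ^ q * (∑ i, f i ^ 2) ^ q := by
        rw [← Finset.mul_sum, Finset.sum_pow_eq_sum_piAntidiag]

end Aux

section Main
open Finset Nat

/-- Tail bound for p-wise independent signs: if z₁,...,z_m are p-wise independent
uniform random signs, p an even positive integer, f ∈ ℝ^m nonzero, then for any
λ > √p, Pr[|Σᵢ zᵢ fᵢ| ≥ λ‖f‖₂] ≤ (√p/λ)^p. -/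
theorem kwise_signs_tail_bound {Ω : Type*} [MeasurableSpace Ω]
    (μ : Measure Ω) [IsProbabilityMeasure μ] (m : ℕ) (z : Fin m → Ω → ℝ)
    (hmeas : ∀ i, Measurable (z i))
    (hsign : ∀ i ω, z i ω = 1 ∨ z i ω = -1)
    (hunif : ∀ i, μ {ω | z i ω = 1} = 1 / 2)
    (f : Fin m → ℝ) (p : ℕ) (hp : Even p) (hp0 : 0 < p)
    (hindep : ∀ s : Finset (Fin m), s.card ≤ p →
      iIndepFun (fun i : s => z i.val) μ)
    (hf : 0 < Real.sqrt (∑ i, (f i) ^ 2)) (lam : ℝ) (hlam : Real.sqrt p < lam) :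
    (μ {ω | lam * Real.sqrt (∑ i, (f i) ^ 2) ≤ |∑ i, z i ω * f i|}).toReal
      ≤ (Real.sqrt p / lam) ^ p := by
  classical
  obtain ⟨q, hq⟩ := hp
  have hpq : p = 2 * q := by omega
  have hq0 : 0 < q := by omega
  have hp' : Even p := ⟨q, hq⟩
  have hσ2pos : 0 < ∑ i, (f i) ^ 2 := Real.sqrt_pos.mp hf
  have hlampos : 0 < lam := lt_of_le_of_lt (Real.sqrt_nonneg (p:ℝ)) hlam
  have hmom := tail_aux_moment μ m z hmeas hsign hunif f q hq0 (by rw [← hpq]; exact hindep)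
  rw [← hpq] at hmom
  -- measurability and integrability of S^p
  have hSmeas : Measurable fun ω => ∑ i, z i ω * f i :=
    Finset.measurable_sum _ fun i _ => (hmeas i).mul_const _
  have hSp_nonneg : ∀ ω, (0:ℝ) ≤ (∑ i, z i ω * f i) ^ p := fun ω => hp'.pow_nonneg _
  have hSbound : ∀ ω, |∑ i, z i ω * f i| ≤ ∑ i, |f i| := by
    intro ω
    refine (Finset.abs_sum_le_sum_abs _ _).trans (Finset.sum_le_sum fun i _ => ?_)
    rcases hsign i ω with h | h <;> simp [h, abs_mul]
  have hSpint : Integrable (fun ω => (∑ i, z i ω * f i) ^ p) μ := by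
    refine Integrable.mono' (integrable_const ((∑ i, |f i|) ^ p))
      ((hSmeas.pow_const p).aestronglyMeasurable)
      (Filter.Eventually.of_forall fun ω => ?_)
    rw [Real.norm_eq_abs, abs_pow]
    exact pow_le_pow_left₀ (abs_nonneg _) (hSbound ω) p
  -- Markov
  set t : ℝ := lam * Real.sqrt (∑ i, (f i) ^ 2) with htdef
  have htpos : 0 < t := mul_pos hlampos hf
  have hsubset : {ω | t ≤ |∑ i, z i ω * f i|}
      ⊆ {ω | t ^ p ≤ (∑ i, z i ω * f i) ^ p} := by
    intro ω hω
    simp only [Set.mem_setOf_eq] at hω ⊢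
    calc t ^ p ≤ |∑ i, z i ω * f i| ^ p := pow_le_pow_left₀ htpos.le hω p
      _ = |(∑ i, z i ω * f i) ^ p| := (abs_pow _ _).symm
      _ = (∑ i, z i ω * f i) ^ p := abs_of_nonneg (hSp_nonneg ω)
  have hmarkov := mul_meas_ge_le_integral_of_nonneg
    (Filter.Eventually.of_forall hSp_nonneg) hSpint (t ^ p)
  have hmeasmono : (μ {ω | t ≤ |∑ i, z i ω * f i|}).toReal
      ≤ (μ {ω | t ^ p ≤ (∑ i, z i ω * f i) ^ p}).toReal :=
    ENNReal.toReal_mono (measure_ne_top _ _) (measure_mono hsubset)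
  -- combine
  have hkey : t ^ p * (μ {ω | t ≤ |∑ i, z i ω * f i|}).toReal
      ≤ ((p:ℕ) : ℝ) ^ q * (∑ i, (f i) ^ 2) ^ q := by
    calc t ^ p * (μ {ω | t ≤ |∑ i, z i ω * f i|}).toReal
        ≤ t ^ p * (μ {ω | t ^ p ≤ (∑ i, z i ω * f i) ^ p}).toReal := by
          exact mul_le_mul_of_nonneg_left hmeasmono (pow_nonneg htpos.le p)
      _ ≤ ∫ ω, (∑ i, z i ω * f i) ^ p ∂μ := hmarkov
      _ ≤ ((p:ℕ) : ℝ) ^ q * (∑ i, (f i) ^ 2) ^ q := hmom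
  -- arithmetic
  have hσq : Real.sqrt (∑ i, (f i) ^ 2) ^ p = (∑ i, (f i) ^ 2) ^ q := by
    rw [hpq, pow_mul, Real.sq_sqrt hσ2pos.le]
  have hpqr : ((p:ℕ) : ℝ) ^ q = Real.sqrt p ^ p := by
    rw [hpq, pow_mul, Real.sq_sqrt (by positivity : (0:ℝ) ≤ ((2*q : ℕ) : ℝ))]
  have htp : t ^ p = lam ^ p * (∑ i, (f i) ^ 2) ^ q := by
    rw [htdef, mul_pow, hσq]
  have hfinal : ((p:ℕ) : ℝ) ^ q * (∑ i, (f i) ^ 2) ^ q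
      = (Real.sqrt p / lam) ^ p * t ^ p := by
    rw [htp, div_pow, hpqr]
    field_simp
  rw [hfinal] at hkey
  have h2 : (μ {ω | t ≤ |∑ i, z i ω * f i|}).toReal * t ^ p
      ≤ (Real.sqrt p / lam) ^ p * t ^ p := by
    calc (μ {ω | t ≤ |∑ i, z i ω * f i|}).toReal * t ^ p
        = t ^ p * (μ {ω | t ≤ |∑ i, z i ω * f i|}).toReal := mul_comm _ _
      _ ≤ (Real.sqrt p / lam) ^ p * t ^ p := hkey
  exact le_of_mul_le_mul_right h2 (pow_pos htpos p)

end Main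
end

section
/- For p ≥ 1 and ε ∈ (0,1), the ℓ_p norm is (ε, ε^p/p)-smooth: if x, y, z ∈ ℝ^m have non-negative entries, y ≤ x coordinatewise, and (1 − ε^p/p)‖x‖_p ≤ ‖y‖_p, then (1−ε)‖x+z‖_p ≤ ‖y+z‖_p. -/
lemma aux_add_rpow {a b p : ℝ} (ha : 0 ≤ a) (hb : 0 ≤ b) (hp : 1 ≤ p) :
    a ^ p + b ^ p ≤ (a + b) ^ p := by
  have h := NNReal.add_rpow_le_rpow_add (⟨a, ha⟩ : NNReal) ⟨b, hb⟩ hp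
  have h2 := NNReal.coe_le_coe.mpr h
  push_cast [NNReal.coe_rpow] at h2
  exact h2

/-- For p ≥ 1 and ε ∈ (0,1), the ℓ_p norm is (ε, ε^p/p)-smooth: if x, y, z are
non-negative vectors, y ≤ x coordinatewise, and (1 − ε^p/p)‖x‖_p ≤ ‖y‖_p, then
(1−ε)‖x+z‖_p ≤ ‖y+z‖_p. -/
theorem lp_norm_smooth (m : ℕ) (p ε : ℝ) (hp : 1 ≤ p) (hε : 0 < ε) (hε1 : ε < 1)
    (x y z : Fin m → ℝ) (hx : ∀ i, 0 ≤ x i) (hy : ∀ i, 0 ≤ y i) (hz : ∀ i, 0 ≤ z i)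
    (hyx : ∀ i, y i ≤ x i)
    (hsmooth : (1 - ε ^ p / p) * (∑ i, (x i) ^ p) ^ ((1:ℝ)/p)
        ≤ (∑ i, (y i) ^ p) ^ ((1:ℝ)/p)) :
    (1 - ε) * (∑ i, (x i + z i) ^ p) ^ ((1:ℝ)/p)
      ≤ (∑ i, (y i + z i) ^ p) ^ ((1:ℝ)/p) := by
  have hp0 : 0 < p := lt_of_lt_of_le one_pos hp
  have hεp0 : 0 ≤ ε ^ p := Real.rpow_nonneg hε.le p
  have hεp1 : ε ^ p ≤ 1 := Real.rpow_le_one hε.le hε1.le hp0.le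
  have hβ0 : 0 ≤ ε ^ p / p := div_nonneg hεp0 hp0.le
  have hβ1 : ε ^ p / p ≤ 1 := (div_le_one hp0).mpr (hεp1.trans hp)
  have hS0 : 0 ≤ ∑ i, (x i) ^ p :=
    Finset.sum_nonneg fun i _ => Real.rpow_nonneg (hx i) p
  have hT0 : 0 ≤ ∑ i, (y i) ^ p :=
    Finset.sum_nonneg fun i _ => Real.rpow_nonneg (hy i) p
  have hU0 : 0 ≤ ∑ i, (x i + z i) ^ p :=
    Finset.sum_nonneg fun i _ => Real.rpow_nonneg (add_nonneg (hx i) (hz i)) p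
  -- raise hsmooth to the power p
  have h1 : ((1 - ε ^ p / p) * (∑ i, (x i) ^ p) ^ ((1:ℝ)/p)) ^ p
      ≤ ((∑ i, (y i) ^ p) ^ ((1:ℝ)/p)) ^ p :=
    Real.rpow_le_rpow (mul_nonneg (by linarith) (Real.rpow_nonneg hS0 _)) hsmooth hp0.le
  rw [Real.mul_rpow (by linarith) (Real.rpow_nonneg hS0 _)] at h1
  rw [show ((∑ i, (x i) ^ p) ^ ((1:ℝ)/p)) ^ p = ∑ i, (x i) ^ p by
        rw [← Real.rpow_mul hS0, one_div_mul_cancel hp0.ne', Real.rpow_one],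
      show ((∑ i, (y i) ^ p) ^ ((1:ℝ)/p)) ^ p = ∑ i, (y i) ^ p by
        rw [← Real.rpow_mul hT0, one_div_mul_cancel hp0.ne', Real.rpow_one]] at h1
  -- Bernoulli: (1 - β)^p ≥ 1 - pβ = 1 - ε^p
  have hBern : 1 - ε ^ p ≤ (1 - ε ^ p / p) ^ p := by
    have := one_add_mul_self_le_rpow_one_add (s := -(ε ^ p / p)) (by linarith) hp
    rw [show (1 : ℝ) + -(ε ^ p / p) = 1 - ε ^ p / p by ring] at this
    calc 1 - ε ^ p = 1 + p * -(ε ^ p / p) := by field_simp; ring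
      _ ≤ (1 - ε ^ p / p) ^ p := this
  have hST : (1 - ε ^ p) * (∑ i, (x i) ^ p) ≤ ∑ i, (y i) ^ p :=
    le_trans (mul_le_mul_of_nonneg_right hBern hS0) h1
  -- coordinatewise superadditivity
  have hcoord : ∀ i, (x i - y i) ^ p ≤ x i ^ p - y i ^ p := by
    intro i
    have h := aux_add_rpow (sub_nonneg.mpr (hyx i)) (hy i) hp
    rw [sub_add_cancel] at h
    linarith
  have hSU : (∑ i, (x i) ^ p) ≤ ∑ i, (x i + z i) ^ p :=
    Finset.sum_le_sum fun i _ =>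
      Real.rpow_le_rpow (hx i) (by linarith [hz i]) hp0.le
  have hW : (∑ i, (x i - y i) ^ p) ≤ ε ^ p * ∑ i, (x i + z i) ^ p := by
    have h2 : (∑ i, (x i - y i) ^ p) ≤ (∑ i, (x i) ^ p) - ∑ i, (y i) ^ p := by
      rw [← Finset.sum_sub_distrib]
      exact Finset.sum_le_sum fun i _ => hcoord i
    nlinarith [mul_le_mul_of_nonneg_left hSU hεp0]
  -- take p-th roots
  have hWp : (∑ i, (x i - y i) ^ p) ^ ((1:ℝ)/p)
      ≤ ε * (∑ i, (x i + z i) ^ p) ^ ((1:ℝ)/p) := by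
    have h3 := Real.rpow_le_rpow
      (Finset.sum_nonneg fun i _ => Real.rpow_nonneg (sub_nonneg.mpr (hyx i)) p)
      hW (by positivity : (0:ℝ) ≤ 1/p)
    rwa [Real.mul_rpow hεp0 hU0, ← Real.rpow_mul hε.le,
      mul_one_div_cancel hp0.ne', Real.rpow_one] at h3
  -- Minkowski
  have hMink := Real.Lp_add_le_of_nonneg (s := Finset.univ)
    (f := fun i => y i + z i) (g := fun i => x i - y i) hp
    (fun i _ => add_nonneg (hy i) (hz i)) (fun i _ => sub_nonneg.mpr (hyx i))
  have e1 : ∀ i : Fin m, (y i + z i + (x i - y i)) ^ p = (x i + z i) ^ p := by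
    intro i; rw [show y i + z i + (x i - y i) = x i + z i by ring]
  simp only [e1] at hMink
  have hε' : 0 ≤ (∑ i, (y i + z i) ^ p) ^ ((1:ℝ)/p) := Real.rpow_nonneg
    (Finset.sum_nonneg fun i _ => Real.rpow_nonneg (add_nonneg (hy i) (hz i)) p) _
  nlinarith [hMink, hWp]
end

section
/- For 0 < p ≤ 1 and ε ∈ (0,1), the p-th power of the ℓ_p norm is superadditive under suffix structure, giving (ε, ε)-smoothness: if x, y, z ∈ ℝ^m have non-negative entries, y ≤ x coordinatewise, and (1−ε)‖x‖_p^p ≤ ‖y‖_p^p, then (1−ε)‖x+z‖_p^p ≤ ‖y+z‖_p^p. -/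
open Finset

/-- `u` and `v + w` are the two convex combinations of `v` and `u + w` with swapped weights. -/
theorem ConcaveOn.map_add_add_map_le {𝕜 : Type*} [Field 𝕜] [LinearOrder 𝕜]
    [IsStrictOrderedRing 𝕜] {s : Set 𝕜} {f : 𝕜 → 𝕜} (hf : ConcaveOn 𝕜 s f) {u v w : 𝕜}
    (hv : v ∈ s) (huw : u + w ∈ s) (hvu : v ≤ u) (hw : 0 ≤ w) :
    f (u + w) + f v ≤ f u + f (v + w) := by
  obtain hd | hd := (show v ≤ u + w by linarith).eq_or_lt
  · obtain rfl : w = 0 := by linarith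
    obtain rfl : u = v := by linarith
    simp
  have hd : 0 < u + w - v := sub_pos.2 hd
  have hab : w / (u + w - v) + (u - v) / (u + w - v) = 1 := by
    rw [← add_div, div_eq_one_iff_eq hd.ne']; ring
  have hw' := div_nonneg hw hd.le
  have huv' := div_nonneg (sub_nonneg.2 hvu) hd.le
  have hu := hf.2 hv huw hw' huv' hab
  have hvw := hf.2 hv huw huv' hw' (by rw [add_comm, hab])
  have hu_eq : w / (u + w - v) * v + (u - v) / (u + w - v) * (u + w) = u := by
    field_simp; ring
  have hvw_eq : (u - v) / (u + w - v) * v + w / (u + w - v) * (u + w) = v + w := by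
    field_simp; ring
  simp only [smul_eq_mul, hu_eq, hvw_eq] at hu hvw
  linear_combination hu + hvw - (f v + f (u + w)) * hab

theorem Real.rpow_add_add_rpow_le {p u v w : ℝ} (hp : 0 ≤ p) (hp1 : p ≤ 1)
    (hv : 0 ≤ v) (hvu : v ≤ u) (hw : 0 ≤ w) :
    (u + w) ^ p + v ^ p ≤ u ^ p + (v + w) ^ p :=
  (Real.concaveOn_rpow hp hp1).map_add_add_map_le hv (by simp only [Set.mem_Ici]; linarith)
    hvu hw

theorem Real.sum_rpow_add_sub_sum_rpow_add_le {ι : Type*} (s : Finset ι) {p : ℝ} (hp : 0 ≤ p)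
    (hp1 : p ≤ 1) {x y z : ι → ℝ} (hy : ∀ i, 0 ≤ y i) (hyx : ∀ i, y i ≤ x i)
    (hz : ∀ i, 0 ≤ z i) :
    ∑ i ∈ s, (x i + z i) ^ p - ∑ i ∈ s, (y i + z i) ^ p ≤ ∑ i ∈ s, x i ^ p - ∑ i ∈ s, y i ^ p := by
  have := sum_le_sum fun i (_ : i ∈ s) => rpow_add_add_rpow_le hp hp1 (hy i) (hyx i) (hz i)
  simp only [sum_add_distrib] at this
  linarith

theorem lp_pow_smooth_general (m : ℕ) (p ε : ℝ) (hp : 0 < p) (hp1 : p ≤ 1)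
    (hε : 0 < ε)
    (x y z : Fin m → ℝ) (hy : ∀ i, 0 ≤ y i) (hz : ∀ i, 0 ≤ z i)
    (hyx : ∀ i, y i ≤ x i)
    (hsmooth : (1 - ε) * ∑ i, (x i) ^ p ≤ ∑ i, (y i) ^ p) :
    (1 - ε) * ∑ i, (x i + z i) ^ p ≤ ∑ i, (y i + z i) ^ p := by
  have hincr := Real.sum_rpow_add_sub_sum_rpow_add_le univ hp.le hp1 hy hyx hz
  have hmono : ∑ i, x i ^ p ≤ ∑ i, (x i + z i) ^ p := sum_le_sum fun i _ =>
    Real.rpow_le_rpow ((hy i).trans (hyx i)) (le_add_of_nonneg_right (hz i)) hp.le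
  calc (1 - ε) * ∑ i, (x i + z i) ^ p
      = ∑ i, (x i + z i) ^ p - ε * ∑ i, (x i + z i) ^ p := by ring
    _ ≤ ∑ i, (x i + z i) ^ p - ε * ∑ i, x i ^ p := by gcongr
    _ ≤ ∑ i, (y i + z i) ^ p := by linarith

/-- For 0 < p ≤ 1 and ε ∈ (0,1), the p-th power of the ℓ_p norm is (ε,ε)-smooth:
if y ≤ x coordinatewise (all non-negative) and (1−ε)‖x‖_p^p ≤ ‖y‖_p^p, then
(1−ε)‖x+z‖_p^p ≤ ‖y+z‖_p^p. -/
theorem lp_pow_smooth (m : ℕ) (p ε : ℝ) (hp : 0 < p) (hp1 : p ≤ 1)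
    (hε : 0 < ε) (hε1 : ε < 1)
    (x y z : Fin m → ℝ) (hx : ∀ i, 0 ≤ x i) (hy : ∀ i, 0 ≤ y i) (hz : ∀ i, 0 ≤ z i)
    (hyx : ∀ i, y i ≤ x i)
    (hsmooth : (1 - ε) * ∑ i, (x i) ^ p ≤ ∑ i, (y i) ^ p) :
    (1 - ε) * ∑ i, (x i + z i) ^ p ≤ ∑ i, (y i + z i) ^ p :=
  lp_pow_smooth_general m p ε hp hp1 hε x y z hy hz hyx hsmooth
end
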